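/- Define a linear functional η on ℂ[x] (polynomials in one variable over ℂ[[q]]) by η(x^j) = q^d if j = 𝗇(d) for some d ≥ 0, and η(x^j) = 0 otherwise, where 𝗇(d) = (n+1)·binomial(d+k, k) − 1 for fixed k ≥ 2, n ≥ 0. Then the bilinear pairing (p₁, p₂) := η(p₁·p₂) on ℂ[[q]][x] has zero kernel: if p is a nonzero polynomial in x with coefficients in ℂ[[q]] of bounded q-degree, then there exists j ≥ 0 with η(p·x^j) ≠ 0. -/

import Mathlib

open scoped Classical

/-- `𝗇(d) = (n+1) * (d+k).choose k - 1`. -/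
def nkd (k n d : ℕ) : ℕ := (n + 1) * (d + k).choose k - 1

/-- The value of the counit `η` on the monomial `x^j`: it is `q^d` if `j = 𝗇(d)`
for some `d ≥ 0`, and `0` otherwise. (Here `q` is `Polynomial.X : Polynomial ℂ`.) -/
noncomputable def etaMon (k n j : ℕ) : Polynomial ℂ :=
  if h : ∃ d, nkd k n d = j then Polynomial.X ^ h.choose else 0

/-- The counit `η : ℂ[q][x] → ℂ[q]`, extended `q`-linearly from `η(x^j) = etaMon k n j`.
A polynomial in `x` with coefficients in `ℂ[q]` models an element of `ℂ[[q]][x]` whose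
coefficients have bounded `q`-degree. -/
noncomputable def eta (k n : ℕ) (p : Polynomial (Polynomial ℂ)) : Polynomial ℂ :=
  p.sum fun j c => c * etaMon k n j

lemma choose_ge (d k : ℕ) (hk : 1 ≤ k) : d + 1 ≤ (d + k).choose k := by
  induction d with
  | zero => simp
  | succ d ih =>
    obtain ⟨k, rfl⟩ : ∃ k', k = k' + 1 := ⟨k - 1, by omega⟩
    have h1 : (d + 1 + (k + 1)) = (d + (k+1)) + 1 := by ring
    rw [h1, Nat.choose_succ_succ']
    have hpos : 1 ≤ (d + (k + 1)).choose k := Nat.choose_pos (by omega)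
    have h2 := ih
    omega

lemma nkd_succ (k n d : ℕ) (hk : 1 ≤ k) :
    nkd k n (d + 1) = nkd k n d + (n + 1) * (d + k).choose (k - 1) := by
  obtain ⟨k, rfl⟩ : ∃ k', k = k' + 1 := ⟨k - 1, by omega⟩
  unfold nkd
  have h1 : d + 1 + (k + 1) = (d + (k + 1)) + 1 := by ring
  rw [h1, Nat.choose_succ_succ']
  have hpos : 1 ≤ (d + (k + 1)).choose (k + 1) := Nat.choose_pos (by omega)
  have h2 : (k + 1) - 1 = k := by omega
  rw [h2]
  rw [Nat.mul_add]
  have h5 : 1 ≤ (n + 1) * (d + (k + 1)).choose (k + 1) := Nat.mul_pos (by omega) hpos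
  omega

lemma nkd_mono (k n : ℕ) (hk : 1 ≤ k) : StrictMono (nkd k n) := by
  apply strictMono_nat_of_lt_succ
  intro d
  rw [nkd_succ k n d hk]
  have h1 : 1 ≤ (n+1) * (d + k).choose (k - 1) := Nat.mul_pos (by omega) (Nat.choose_pos (by omega))
  omega

lemma nkd_gap (k n d : ℕ) (hk : 2 ≤ k) : nkd k n d + d + 2 ≤ nkd k n (d + 1) := by
  rw [nkd_succ k n d (by omega)]
  have h1 : d + 2 ≤ (d + k).choose (k - 1) := by
    have := choose_ge (d + 1) (k - 1) (by omega)
    calc d + 2 ≤ (d + 1 + (k - 1)).choose (k - 1) := this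
      _ ≤ (d + k).choose (k - 1) := Nat.choose_le_choose _ (by omega)
  have h2 : d + 2 ≤ (n + 1) * (d + k).choose (k - 1) :=
    le_trans h1 (Nat.le_mul_of_pos_left _ (by omega))
  omega

lemma nkd_ge (k n d : ℕ) (hk : 1 ≤ k) : d ≤ nkd k n d := by
  unfold nkd
  have h1 : d + 1 ≤ (d + k).choose k := choose_ge d k hk
  have h2 : d + 1 ≤ (n + 1) * (d + k).choose k :=
    le_trans h1 (Nat.le_mul_of_pos_left _ (by omega))
  omega

lemma eta_zero (k n : ℕ) : eta k n 0 = 0 := Polynomial.sum_zero_index _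

lemma eta_monomial (k n i : ℕ) (c : Polynomial ℂ) :
    eta k n (Polynomial.monomial i c) = c * etaMon k n i :=
  Polynomial.sum_monomial_index c _ (by simp)

lemma eta_add (k n : ℕ) (a b : Polynomial (Polynomial ℂ)) :
    eta k n (a + b) = eta k n a + eta k n b :=
  Polynomial.sum_add_index a b _ (fun i => by simp) (fun i b₁ b₂ => add_mul _ _ _)

lemma eta_sum (k n : ℕ) (s : Finset ℕ) (g : ℕ → ℕ) (f : ℕ → Polynomial ℂ) :
    eta k n (∑ i ∈ s, Polynomial.monomial (g i) (f i))
      = ∑ i ∈ s, f i * etaMon k n (g i) := by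
  classical
  induction s using Finset.induction with
  | empty => simp [eta_zero]
  | insert x s hx ih =>
    rw [Finset.sum_insert hx, Finset.sum_insert hx, eta_add, eta_monomial, ih]

/-- For `k ≥ 2`, the pairing `(p₁, p₂) ↦ η (p₁ * p₂)` on `ℂ[[q]][x]` induced by the
counit `η` has zero kernel: for any nonzero polynomial `p` in `x` with coefficients in
`ℂ[[q]]` of bounded `q`-degree, there is `j ≥ 0` with `η (p * x^j) ≠ 0`. -/
theorem eta_pairing_nondegenerate (k n : ℕ) (hk : 2 ≤ k)
    (p : Polynomial (Polynomial ℂ)) (hp : p ≠ 0) :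
    ∃ j : ℕ, eta k n (p * Polynomial.X ^ j) ≠ 0 := by
  classical
  set m := p.natDegree with hm
  set N := nkd k n (m + 1) with hN
  have hmN : m + 1 ≤ N := le_trans (by omega) (nkd_ge k n (m+1) (by omega))
  refine ⟨N - m, ?_⟩
  set j := N - m with hj
  have hmj : m + j = N := by omega
  -- express p * X^j as a sum of monomials
  have hsum : p * Polynomial.X ^ j
      = ∑ i ∈ p.support, Polynomial.monomial (i + j) (p.coeff i) := by
    conv_lhs => rw [p.as_sum_support, Finset.sum_mul]
    refine Finset.sum_congr rfl fun i _ => ?_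
    rw [← Polynomial.monomial_one_right_eq_X_pow, Polynomial.monomial_mul_monomial, mul_one]
  have heta : eta k n (p * Polynomial.X ^ j)
      = ∑ i ∈ p.support, p.coeff i * etaMon k n (i + j) := by
    rw [hsum, eta_sum]
  have hmono := nkd_mono k n (by omega)
  have hetaN : etaMon k n N = Polynomial.X ^ (m + 1) := by
    unfold etaMon
    rw [dif_pos ⟨m + 1, rfl⟩]
    congr 1
    exact hmono.injective (Exists.choose_spec (⟨m + 1, rfl⟩ : ∃ d, nkd k n d = N))
  have hgap := nkd_gap k n m hk
  have hzero : ∀ i ∈ p.support, i ≠ m → p.coeff i * etaMon k n (i + j) = 0 := by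
    intro i hi hne
    have him : i < m := lt_of_le_of_ne (Polynomial.le_natDegree_of_ne_zero
      (Polynomial.mem_support_iff.mp hi)) hne
    have : etaMon k n (i + j) = 0 := by
      unfold etaMon
      rw [dif_neg]
      rintro ⟨d', hd'⟩
      have hlt : nkd k n d' < N := by omega
      have hd'le : d' ≤ m := by
        by_contra hcon
        have : N ≤ nkd k n d' := hmono.le_iff_le.mpr (show m + 1 ≤ d' by omega)
        omega
      have : nkd k n d' ≤ nkd k n m := hmono.le_iff_le.mpr hd'le
      omega
    rw [this, mul_zero]
  rw [heta, Finset.sum_eq_single m hzero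
    (fun h => absurd (Polynomial.natDegree_mem_support_of_nonzero hp) h),
    hmj, hetaN]
  exact mul_ne_zero (Polynomial.leadingCoeff_ne_zero.mpr hp)
    (pow_ne_zero _ Polynomial.X_ne_zero)
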